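/- arXiv:1011.2588 — 5 statements merged into one kernel-verified Lean document; each statement's English description precedes it below -/
import Mathlib

section
/- For a primitive n-th root of unity ω and a_i := (ω-1)^i · ω^{i(i+1)/2}, for all 1 ≤ i ≤ n-1: (∑_{j=0}^{i} ω^{j-i}) · a_i + a_{i-1} = ω^{i+1} · a_{i-1}. -/
open Finset

/-- The coefficients `a_i = (ω-1)^i ω^{i(i+1)/2}`. -/
def aCoeff {K : Type*} [Field K] (ω : K) (i : ℕ) : K :=
  (ω - 1) ^ i * ω ^ (i * (i + 1) / 2)

lemma succ_mul_succ_succ_div_two (m : ℕ) : (m + 1) * (m + 1 + 1) / 2 = m * (m + 1) / 2 + (m + 1) := by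
  rw [show (m + 1) * (m + 1 + 1) = m * (m + 1) + (m + 1) * 2 by ring,
    Nat.add_mul_div_right _ _ two_pos]

lemma aCoeff_succ {K : Type*} [Field K] (ω : K) (m : ℕ) :
    aCoeff ω (m + 1) = (ω - 1) * ω ^ (m + 1) * aCoeff ω m := by
  rw [aCoeff, aCoeff, succ_mul_succ_succ_div_two, pow_succ, pow_add]
  ring

lemma sum_range_zpow_sub_mul_pow {K : Type*} [DivisionRing K] {x : K} (hx : x ≠ 0) (i : ℕ) :
    (∑ j ∈ range (i + 1), x ^ ((j : ℤ) - i)) * x ^ i = ∑ j ∈ range (i + 1), x ^ j := by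
  rw [sum_mul]
  refine sum_congr rfl fun j _ => ?_
  rw [← zpow_natCast x i, ← zpow_add₀ hx, sub_add_cancel, zpow_natCast]

theorem aCoeff_rec_general {K : Type*} [Field K] {n : ℕ} (hn : 1 < n) {ω : K}
    (hω : IsPrimitiveRoot ω n) (i : ℕ) (hi1 : 1 ≤ i) :
    (∑ j ∈ Finset.range (i + 1), ω ^ ((j : ℤ) - (i : ℤ))) * aCoeff ω i + aCoeff ω (i - 1) =
      ω ^ (i + 1) * aCoeff ω (i - 1) := by
  have hω0 : ω ≠ 0 := hω.ne_zero (by omega)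
  obtain ⟨m, rfl⟩ : ∃ m, i = m + 1 := ⟨i - 1, by omega⟩
  rw [Nat.add_sub_cancel, aCoeff_succ]
  linear_combination (ω - 1) * aCoeff ω m * sum_range_zpow_sub_mul_pow hω0 (m + 1) +
    aCoeff ω m * geom_sum_mul ω (m + 1 + 1)

theorem aCoeff_rec {K : Type*} [Field K] [CharZero K] {n : ℕ} (hn : 1 < n) {ω : K}
    (hω : IsPrimitiveRoot ω n) (i : ℕ) (hi1 : 1 ≤ i) (hi2 : i ≤ n - 1) :
    (∑ j ∈ Finset.range (i + 1), ω ^ ((j : ℤ) - (i : ℤ))) * aCoeff ω i + aCoeff ω (i - 1) =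
      ω ^ (i + 1) * aCoeff ω (i - 1) :=
  aCoeff_rec_general hn hω i hi1
end

section
/- For a primitive n-th root of unity ω in a field of characteristic 0, and natural numbers k, s with 0 ≤ k, s ≤ n-1 and k + s ≥ n: ∑ ω^{∑_{j=2}^{s+1} i_j(j-1)} = 0, where the sum runs over all (s+1)-tuples (i_1,...,i_{s+1}) of nonnegative integers with i_1 + ... + i_{s+1} = k. -/
/-!
Write `F(m, k)` for the sum of `q ^ (∑ j, j * i_j)` over compositions `i` of `k` into `m`
parts: the `q`-analogue of `Nat.multichoose m k`, i.e. the Gaussian binomial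
`[m + k - 1 choose k]_q`. Splitting off the first, resp. the last, part of a composition gives two
Pascal-type recurrences, whose combination is
`(1 - q^(k+1)) F(m+1, k+1) = (1 - q^(m+k+1)) F(m+1, k)`.
For `q = ω` and `m = s` the right-hand factor vanishes when `s + k + 1 = n`, while
`1 - ω^(k+1) ≠ 0` for `k + 1 < n`; so `F(s + 1, k) = 0` for `n - s ≤ k < n`.
-/

open Finset

namespace Finset.Nat

theorem sum_antidiagonalTuple_succ {M : Type*} [AddCommMonoid M] (m k : ℕ)
    (p : Fin (m + 1)) (f : (Fin (m + 1) → ℕ) → M) :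
    ∑ x ∈ antidiagonalTuple (m + 1) k, f x =
      ∑ q ∈ antidiagonal k, ∑ y ∈ antidiagonalTuple m q.2, f (p.insertNth q.1 y) := by
  rw [sum_sigma']
  refine sum_nbij' (fun x => ⟨(x p, k - x p), p.removeNth x⟩)
    (fun z => p.insertNth z.1.1 z.2) ?_ ?_ ?_ ?_ ?_
  · intro x hx
    rw [mem_antidiagonalTuple, Fin.sum_univ_succAbove _ p] at hx
    simp only [mem_sigma, HasAntidiagonal.mem_antidiagonal, mem_antidiagonalTuple]
    exact ⟨by omega, by simp only [Fin.removeNth]; omega⟩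
  · rintro ⟨⟨a, b⟩, y⟩ hz
    simp only [mem_sigma, HasAntidiagonal.mem_antidiagonal, mem_antidiagonalTuple] at hz
    rw [mem_antidiagonalTuple, Fin.sum_univ_succAbove _ p]
    simp [hz]
  · intro x _
    simp
  · rintro ⟨⟨a, b⟩, y⟩ hz
    simp only [mem_sigma, HasAntidiagonal.mem_antidiagonal, mem_antidiagonalTuple] at hz
    simp [← hz.1]
  · intro x _
    simp

end Finset.Nat

section qMultichoose

variable {R : Type*}

def qMultichoose [CommSemiring R] (q : R) (m k : ℕ) : R :=
  ∑ i ∈ Nat.antidiagonalTuple m k, q ^ (∑ j : Fin m, i j * (j : ℕ))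

section CommSemiring

variable [CommSemiring R] (q : R) (m k : ℕ)

theorem qMultichoose_succ_eq_sum_cons :
    qMultichoose q (m + 1) k = ∑ p ∈ antidiagonal k, q ^ p.2 * qMultichoose q m p.2 := by
  rw [qMultichoose, Nat.sum_antidiagonalTuple_succ m k 0]
  refine sum_congr rfl fun p _ => ?_
  rw [qMultichoose, mul_sum]
  refine sum_congr rfl fun y hy => ?_
  rw [Nat.mem_antidiagonalTuple] at hy
  simp [Fin.sum_univ_succ, mul_add, sum_add_distrib, hy, pow_add, mul_comm]

theorem qMultichoose_succ_eq_sum_snoc :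
    qMultichoose q (m + 1) k = ∑ p ∈ antidiagonal k, q ^ (m * p.1) * qMultichoose q m p.2 := by
  rw [qMultichoose, Nat.sum_antidiagonalTuple_succ m k (Fin.last m)]
  refine sum_congr rfl fun p _ => ?_
  rw [qMultichoose, mul_sum]
  refine sum_congr rfl fun y _ => ?_
  simp [Fin.sum_univ_castSucc, pow_add, mul_comm]

theorem qMultichoose_succ_succ_eq_pow_mul_add :
    qMultichoose q (m + 1) (k + 1) =
      q ^ (k + 1) * qMultichoose q m (k + 1) + qMultichoose q (m + 1) k := by
  rw [qMultichoose_succ_eq_sum_cons, Nat.sum_antidiagonal_succ, ← qMultichoose_succ_eq_sum_cons]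

theorem qMultichoose_succ_succ_eq_add_pow_mul :
    qMultichoose q (m + 1) (k + 1) =
      qMultichoose q m (k + 1) + q ^ m * qMultichoose q (m + 1) k := by
  rw [qMultichoose_succ_eq_sum_snoc, Nat.sum_antidiagonal_succ, qMultichoose_succ_eq_sum_snoc,
    mul_sum]
  congr 1
  · simp
  · exact sum_congr rfl fun p _ => by ring

end CommSemiring

theorem one_sub_pow_mul_qMultichoose_succ_succ [CommRing R] (q : R) (m k : ℕ) :
    (1 - q ^ (k + 1)) * qMultichoose q (m + 1) (k + 1) =
      (1 - q ^ (m + k + 1)) * qMultichoose q (m + 1) k := by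
  linear_combination qMultichoose_succ_succ_eq_pow_mul_add q m k -
    q ^ (k + 1) * qMultichoose_succ_succ_eq_add_pow_mul q m k

theorem qMultichoose_eq_zero_of_isPrimitiveRoot [CommRing R] [NoZeroDivisors R] {q : R}
    {n s k : ℕ} (hq : IsPrimitiveRoot q n) (hs : s < n) (hk : k < n) (hks : n ≤ k + s) :
    qMultichoose q (s + 1) k = 0 := by
  induction k with
  | zero => omega
  | succ k ih =>
    have hrhs : (1 - q ^ (s + k + 1)) * qMultichoose q (s + 1) k = 0 := by
      rcases hks.eq_or_lt with hn | hn
      · rw [show s + k + 1 = n by omega, hq.pow_eq_one, sub_self, zero_mul]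
      · rw [ih (by omega) (by omega), mul_zero]
    have hfactor : 1 - q ^ (k + 1) ≠ 0 :=
      sub_ne_zero.2 (hq.pow_ne_one_of_pos_of_lt k.succ_ne_zero hk).symm
    rw [← one_sub_pow_mul_qMultichoose_succ_succ] at hrhs
    exact (mul_eq_zero.1 hrhs).resolve_left hfactor

end qMultichoose

theorem composition_sum_eq_zero_general {K : Type*} [Field K] {n : ℕ} (hn : 1 < n)
    {ω : K} (hω : IsPrimitiveRoot ω n) (k s : ℕ) (hk : k ≤ n - 1) (hs : s ≤ n - 1)
    (hks : n ≤ k + s) :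
    ∑ i ∈ Finset.Nat.antidiagonalTuple (s + 1) k, ω ^ (∑ j : Fin (s + 1), i j * (j : ℕ)) = 0 :=
  qMultichoose_eq_zero_of_isPrimitiveRoot hω (by omega) (by omega) hks

theorem composition_sum_eq_zero {K : Type*} [Field K] [CharZero K] {n : ℕ} (hn : 1 < n)
    {ω : K} (hω : IsPrimitiveRoot ω n) (k s : ℕ) (hk : k ≤ n - 1) (hs : s ≤ n - 1)
    (hks : n ≤ k + s) :
    ∑ i ∈ Finset.Nat.antidiagonalTuple (s + 1) k, ω ^ (∑ j : Fin (s + 1), i j * (j : ℕ)) = 0 :=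
  composition_sum_eq_zero_general hn hω k s hk hs hks
end

section
/- If ω is a primitive n-th root of unity and k, s are naturals with 1 ≤ k ≤ n-1 and n ≤ k+s ≤ k+n-1, then the Gaussian binomial coefficient (k+s choose k)_ω evaluated at ω equals 0. -/
/-
Clearing denominators, the `q`-Pascal rule gives
`(m choose k)_q * ∏_{i<k} (q^(i+1) - 1) = ∏_{i<k} (q^(m-i) - 1)`.
At a primitive `n`-th root of unity `ω` with `k < n ≤ m < n + k`, the right-hand side contains the
factor `ω^n - 1 = 0`, while every factor `ω^(i+1) - 1` with `i + 1 ≤ k < n` on the left is nonzero.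
-/

open Finset

/-- The Gaussian binomial coefficient as a polynomial in `q`, via the `q`-Pascal rule
`(n+1 choose k+1)_q = (n choose k)_q + q^(k+1) (n choose k+1)_q`. -/
noncomputable def gaussPoly : ℕ → ℕ → Polynomial ℤ
  | 0, 0 => 1
  | 0, _ + 1 => 0
  | _ + 1, 0 => 1
  | n + 1, k + 1 => gaussPoly n k + Polynomial.X ^ (k + 1) * gaussPoly n (k + 1)

open Polynomial

/-- For `k > m` both sides vanish: the right-hand side through its factor `X ^ (m - m) - 1`. -/
theorem gaussPoly_mul_prod_X_pow_sub_one (m k : ℕ) :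
    gaussPoly m k * ∏ i ∈ range k, (X ^ (i + 1) - 1) = ∏ i ∈ range k, (X ^ (m - i) - 1) := by
  induction m generalizing k with
  | zero =>
    cases k with
    | zero => simp [gaussPoly]
    | succ k => simp [gaussPoly, prod_range_succ']
  | succ m ih =>
    cases k with
    | zero => simp [gaussPoly]
    | succ k =>
      set num := ∏ i ∈ range k, (X ^ (m - i) - 1 : ℤ[X])
      have hnum : ∏ i ∈ range (k + 1), (X ^ (m + 1 - i) - 1 : ℤ[X]) = num * (X ^ (m + 1) - 1) := by
        simp [num, prod_range_succ']
      have hpow : num * X ^ (k + 1) * X ^ (m - k) = num * X ^ (m + 1) := by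
        rcases le_or_gt k m with hkm | hmk
        · rw [mul_assoc, ← pow_add]
          congr 2
          omega
        · have : num = 0 := prod_eq_zero (mem_range.mpr hmk) (by simp)
          simp [this]
      have ih' := ih (k + 1)
      rw [prod_range_succ, prod_range_succ] at ih'
      rw [gaussPoly, hnum, prod_range_succ]
      linear_combination (X ^ (k + 1) - 1 : ℤ[X]) * ih k + X ^ (k + 1) * ih' + hpow

theorem aeval_gaussPoly_eq_zero_of_isPrimitiveRoot {R : Type*} [CommRing R] [IsDomain R]
    {ω : R} {n m k : ℕ} (hω : IsPrimitiveRoot ω n) (hk : k < n) (hnm : n ≤ m) (hmk : m < n + k) :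
    aeval ω (gaussPoly m k) = 0 := by
  have key := congrArg (aeval ω) (gaussPoly_mul_prod_X_pow_sub_one m k)
  simp only [map_mul, map_prod, map_sub, map_pow, map_one, aeval_X] at key
  have hnum : ∏ i ∈ range k, (ω ^ (m - i) - 1) = 0 :=
    prod_eq_zero (i := m - n) (mem_range.mpr (by omega)) <| by
      rw [Nat.sub_sub_self hnm, hω.pow_eq_one, sub_self]
  have hden : ∏ i ∈ range k, (ω ^ (i + 1) - 1) ≠ 0 :=
    prod_ne_zero_iff.mpr fun i hi =>
      sub_ne_zero.mpr <| hω.pow_ne_one_of_pos_of_lt i.succ_ne_zero (by grind)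
  exact (mul_eq_zero.mp (key.trans hnum)).resolve_right hden

theorem qbinom_eq_zero_of_root_general {K : Type*} [Field K] {n : ℕ} (hn : 1 < n)
    {ω : K} (hω : IsPrimitiveRoot ω n) (k s : ℕ) (hk2 : k ≤ n - 1)
    (hks1 : n ≤ k + s) (hks2 : k + s ≤ k + n - 1) :
    Polynomial.aeval ω (gaussPoly (k + s) k) = 0 :=
  aeval_gaussPoly_eq_zero_of_isPrimitiveRoot hω (by omega) hks1 (by omega)

theorem qbinom_eq_zero_of_root {K : Type*} [Field K] [CharZero K] {n : ℕ} (hn : 1 < n)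
    {ω : K} (hω : IsPrimitiveRoot ω n) (k s : ℕ) (hk1 : 1 ≤ k) (hk2 : k ≤ n - 1)
    (hks1 : n ≤ k + s) (hks2 : k + s ≤ k + n - 1) :
    Polynomial.aeval ω (gaussPoly (k + s) k) = 0 :=
  qbinom_eq_zero_of_root_general hn hω k s hk2 hks1 hks2
end

section
/- In k[[z]], the Rothe/Hardy–Wright identity: for ω ∈ k with ω^j ≠ 1 for all relevant j, 1/((1-z)(1-zω)···(1-zω^{s})) = ∑_{k≥0} z^k · ∏_{j=1}^{k} (1-ω^{s+j})/(1-ω^j). -/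
open Finset PowerSeries

/-!
Write `G_t` for the series on the right-hand side with `s` replaced by `t`; its coefficients are
the Gaussian binomial coefficients `[t + k choose k]_ω`. The `ω`-Pascal rule
`[t + k + 1 choose k + 1] - ω^(t+1) [t + k choose k] = [t + k choose k + 1]` says exactly that
`(1 - ω^(t+1) z) G_(t+1) = G_t`, while `G_0 = 1/(1 - z)`. Induction on `t` then shows that
`G_s` inverts `(1 - z)(1 - ω z) ⋯ (1 - ω^s z)`.
-/

namespace PowerSeries

variable {K : Type*} [Field K]

/-- The Gaussian binomial coefficient `[t + k choose k]_ω`; it is meaningful when no `ω ^ j`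
with `1 ≤ j ≤ k` equals `1`, since otherwise a denominator is `0`. -/
def gaussBinom (ω : K) (t k : ℕ) : K :=
  ∏ j ∈ Icc 1 k, (1 - ω ^ (t + j)) / (1 - ω ^ j)

theorem gaussBinom_succ_right (ω : K) (t k : ℕ) :
    gaussBinom ω t (k + 1) = gaussBinom ω t k * ((1 - ω ^ (t + (k + 1))) / (1 - ω ^ (k + 1))) :=
  prod_Icc_succ_top (by omega) _

theorem gaussBinom_zero_left {ω : K} (hω : ∀ j : ℕ, 1 ≤ j → ω ^ j ≠ 1) (k : ℕ) :
    gaussBinom ω 0 k = 1 :=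
  prod_eq_one fun j hj => by
    rw [zero_add, div_self (sub_ne_zero.mpr (hω j (mem_Icc.mp hj).1).symm)]

theorem gaussBinom_succ_left_mul (ω : K) (t : ℕ) :
    ∀ k : ℕ, gaussBinom ω (t + 1) k * (1 - ω ^ (t + 1)) = gaussBinom ω t k * (1 - ω ^ (t + 1 + k))
  | 0 => by simp [gaussBinom]
  | k + 1 => by
    rw [gaussBinom_succ_right, gaussBinom_succ_right, mul_right_comm,
      gaussBinom_succ_left_mul ω t k]
    ring_nf

theorem gaussBinom_pascal {ω : K} {k : ℕ} (hk : ω ^ (k + 1) ≠ 1) (t : ℕ) :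
    gaussBinom ω (t + 1) (k + 1) - ω ^ (t + 1) * gaussBinom ω (t + 1) k = gaussBinom ω t (k + 1) := by
  have hden : 1 - ω ^ (k + 1) ≠ 0 := sub_ne_zero.mpr hk.symm
  rw [gaussBinom_succ_right, gaussBinom_succ_right]
  field_simp
  linear_combination gaussBinom_succ_left_mul ω t k

theorem one_sub_C_mul_X_mul_mk_gaussBinom {ω : K} (hω : ∀ j : ℕ, 1 ≤ j → ω ^ j ≠ 1) (t : ℕ) :
    (1 - C (ω ^ (t + 1)) * X) * mk (gaussBinom ω (t + 1)) = mk (gaussBinom ω t) := by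
  ext (_ | k)
  · simp [gaussBinom]
  · rw [sub_mul, one_mul, map_sub, mul_assoc, coeff_C_mul, coeff_succ_X_mul]
    simp only [coeff_mk]
    exact gaussBinom_pascal (hω (k + 1) (by omega)) t

theorem prod_one_sub_C_mul_X_mul_mk_gaussBinom {ω : K} (hω : ∀ j : ℕ, 1 ≤ j → ω ^ j ≠ 1) :
    ∀ t : ℕ, (∏ l ∈ range (t + 1), (1 - C (ω ^ l) * X)) * mk (gaussBinom ω t) = 1
  | 0 => by
    rw [prod_range_one, pow_zero, map_one, one_mul, mul_comm, funext (gaussBinom_zero_left hω)]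
    exact mk_one_mul_one_sub_eq_one K
  | t + 1 => by
    rw [prod_range_succ, mul_assoc, one_sub_C_mul_X_mul_mk_gaussBinom hω,
      prod_one_sub_C_mul_X_mul_mk_gaussBinom hω t]

end PowerSeries

theorem rothe_identity {K : Type*} [Field K] (ω : K) (s : ℕ)
    (hω : ∀ j : ℕ, 1 ≤ j → ω ^ j ≠ 1) :
    (∏ l ∈ Finset.range (s + 1), (1 - PowerSeries.C (ω ^ l) * PowerSeries.X))⁻¹ =
      PowerSeries.mk fun k => ∏ j ∈ Finset.Icc 1 k, (1 - ω ^ (s + j)) / (1 - ω ^ j) := by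
  have hconst : constantCoeff (∏ l ∈ range (s + 1), (1 - C (ω ^ l) * X)) ≠ 0 := by
    simp [map_prod]
  rw [inv_eq_iff_mul_eq_one hconst, mul_comm]
  exact prod_one_sub_C_mul_X_mul_mk_gaussBinom hω s
end

section
/- Let ω be a primitive n-th root of unity. Then the number-theoretic identity holds: for 0 ≤ k, s ≤ n-1, ∑_{compositions i_1+...+i_{s+1}=k} ω^{i_2 + 2i_3 + ... + s·i_{s+1}} equals (k+s choose k)_ω if k+s < n, and 0 if k+s ≥ n. -/
open Finset

/-!
Splitting off the first part of a composition shows that the weighted sums satisfy the iterated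
`q`-Pascal rule, so they are the Gaussian polynomials `(k+s choose k)_q` for every `q`. At a
primitive `n`-th root of unity `ω` these vanish once `k + s ≥ n`: in
`(k+s choose k)_q [k]_q! [s]_q! = [k+s]_q!` the right side contains the factor
`[n]_ω = 1 + ω + ⋯ + ω^(n-1) = 0`, while `[k]_ω!` and `[s]_ω!` are nonzero because `ω^j ≠ 1`
for `0 < j < n`.
-/

open Polynomial

theorem Finset.Nat.sum_antidiagonalTuple_succ_s15 {M : Type*} [AddCommMonoid M] (k n : ℕ)
    (f : (Fin (k + 1) → ℕ) → M) :
    ∑ x ∈ Nat.antidiagonalTuple (k + 1) n, f x =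
      ∑ p ∈ antidiagonal n, ∑ x ∈ Nat.antidiagonalTuple k p.2, f (Fin.cons p.1 x) := by
  change ((List.Nat.antidiagonalTuple (k + 1) n).map f).sum =
    ((List.Nat.antidiagonal n).map fun p : ℕ × ℕ =>
      ((List.Nat.antidiagonalTuple k p.2).map fun x => f (Fin.cons p.1 x)).sum).sum
  simp only [List.Nat.antidiagonalTuple, List.flatMap_def, List.map_flatten, List.map_map,
    Function.comp_def, List.sum_flatten]

theorem gaussPoly_zero_right (n : ℕ) : gaussPoly n 0 = 1 := by
  cases n <;> rfl

theorem gaussPoly_succ_succ (n k : ℕ) :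
    gaussPoly (n + 1) (k + 1) = gaussPoly n k + X ^ (k + 1) * gaussPoly n (k + 1) :=
  rfl

theorem gaussPoly_eq_zero_of_lt {n k : ℕ} (h : n < k) : gaussPoly n k = 0 := by
  induction n generalizing k with
  | zero => obtain ⟨k, rfl⟩ := Nat.exists_eq_add_one_of_ne_zero h.ne'; rfl
  | succ n ih =>
    obtain ⟨k, rfl⟩ := Nat.exists_eq_add_one_of_ne_zero (by omega : k ≠ 0)
    rw [gaussPoly_succ_succ, ih (by omega), ih (by omega), mul_zero, add_zero]

theorem gaussPoly_self (n : ℕ) : gaussPoly n n = 1 := by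
  induction n with
  | zero => rfl
  | succ n ih =>
    rw [gaussPoly_succ_succ, ih, gaussPoly_eq_zero_of_lt n.lt_succ_self, mul_zero, add_zero]

theorem gaussPoly_add_succ_eq_sum_antidiagonal (k s : ℕ) :
    gaussPoly (k + s + 1) k = ∑ p ∈ antidiagonal k, X ^ p.2 * gaussPoly (p.2 + s) p.2 := by
  induction k with
  | zero => simp [gaussPoly_zero_right]
  | succ k ih =>
    rw [Nat.sum_antidiagonal_succ, ← ih, show k + 1 + s + 1 = k + s + 1 + 1 by omega,
      gaussPoly_succ_succ, show k + s + 1 = k + 1 + s by omega, add_comm]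

/-- With 0-based indices this is the exponent `i₂ + 2 i₃ + ⋯ + s i_{s+1}` of the paper. -/
def tupleWeight {m : ℕ} (x : Fin m → ℕ) : ℕ := ∑ j, x j * (j : ℕ)

theorem tupleWeight_cons {m : ℕ} (a : ℕ) (y : Fin m → ℕ) :
    tupleWeight (Fin.cons a y : Fin (m + 1) → ℕ) = ∑ j, y j + tupleWeight y := by
  simp only [tupleWeight, Fin.sum_univ_succ, Fin.cons_zero, Fin.cons_succ, Fin.val_zero,
    Fin.val_succ, mul_zero, zero_add, mul_add_one, sum_add_distrib, add_comm]

theorem sum_antidiagonalTuple_X_pow_tupleWeight (s k : ℕ) :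
    ∑ x ∈ Nat.antidiagonalTuple (s + 1) k, (X : ℤ[X]) ^ tupleWeight x = gaussPoly (k + s) k := by
  induction s generalizing k with
  | zero => simp [tupleWeight, gaussPoly_self]
  | succ s ih =>
    rw [Nat.sum_antidiagonalTuple_succ_s15, ← add_assoc, gaussPoly_add_succ_eq_sum_antidiagonal]
    refine sum_congr rfl fun p _ => ?_
    rw [← ih, mul_sum]
    refine sum_congr rfl fun x hx => ?_
    rw [tupleWeight_cons, Nat.mem_antidiagonalTuple.mp hx, pow_add]

noncomputable def qNat (m : ℕ) : ℤ[X] := ∑ t ∈ range m, X ^ t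

noncomputable def qFactorial (m : ℕ) : ℤ[X] := ∏ i ∈ range m, qNat (i + 1)

theorem qNat_add (a b : ℕ) : qNat (a + b) = qNat a + X ^ a * qNat b := by
  simp only [qNat, sum_range_add, mul_sum, pow_add]

theorem qFactorial_succ (m : ℕ) : qFactorial (m + 1) = qFactorial m * qNat (m + 1) :=
  prod_range_succ _ _

theorem gaussPoly_mul_qFactorial_mul_qFactorial (k m : ℕ) :
    gaussPoly (k + m) k * qFactorial k * qFactorial m = qFactorial (k + m) := by
  induction k generalizing m with
  | zero => simp [gaussPoly_zero_right, qFactorial]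
  | succ k ihk =>
    induction m with
    | zero => simp [gaussPoly_self, qFactorial]
    | succ m ihm =>
      have pascal : gaussPoly (k + 1 + (m + 1)) (k + 1) =
          gaussPoly (k + (m + 1)) k + X ^ (k + 1) * gaussPoly (k + 1 + m) (k + 1) := by
        rw [show k + 1 + (m + 1) = k + (m + 1) + 1 by omega, gaussPoly_succ_succ,
          show k + (m + 1) = k + 1 + m by omega]
      calc gaussPoly (k + 1 + (m + 1)) (k + 1) * qFactorial (k + 1) * qFactorial (m + 1)
          = gaussPoly (k + (m + 1)) k * qFactorial k * qFactorial (m + 1) * qNat (k + 1)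
            + X ^ (k + 1) * (gaussPoly (k + 1 + m) (k + 1) * qFactorial (k + 1) * qFactorial m)
              * qNat (m + 1) := by
            rw [pascal, qFactorial_succ k, qFactorial_succ m]; ring
        _ = qFactorial (k + (m + 1)) * (qNat (k + 1) + X ^ (k + 1) * qNat (m + 1)) := by
            rw [ihk, ihm, show k + 1 + m = k + (m + 1) by omega]; ring
        _ = qFactorial (k + 1 + (m + 1)) := by
            rw [← qNat_add, show k + 1 + (m + 1) = k + (m + 1) + 1 by omega, qFactorial_succ]

section RootOfUnity

variable {R : Type*} [CommRing R] [IsDomain R] {n : ℕ} {ζ : R}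

theorem IsPrimitiveRoot.aeval_qNat_eq_zero (hζ : IsPrimitiveRoot ζ n) (hn : 1 < n) :
    aeval ζ (qNat n) = 0 := by
  simpa [qNat] using hζ.geom_sum_eq_zero hn

theorem IsPrimitiveRoot.aeval_qNat_ne_zero (hζ : IsPrimitiveRoot ζ n) {m : ℕ} (hm0 : m ≠ 0)
    (hmn : m < n) : aeval ζ (qNat m) ≠ 0 := by
  intro h
  have hpow : ζ ^ m - 1 = 0 := by
    rw [← geom_sum_mul]; simpa [qNat] using congrArg (· * (ζ - 1)) h
  exact hζ.pow_ne_one_of_pos_of_lt hm0 hmn (sub_eq_zero.mp hpow)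

theorem IsPrimitiveRoot.aeval_qFactorial_ne_zero (hζ : IsPrimitiveRoot ζ n) {m : ℕ}
    (hmn : m < n) : aeval ζ (qFactorial m) ≠ 0 := by
  simp only [qFactorial, map_prod, prod_ne_zero_iff, mem_range]
  exact fun i hi => hζ.aeval_qNat_ne_zero i.succ_ne_zero (by omega)

theorem IsPrimitiveRoot.aeval_qFactorial_eq_zero (hζ : IsPrimitiveRoot ζ n) (hn : 1 < n) {m : ℕ}
    (hnm : n ≤ m) : aeval ζ (qFactorial m) = 0 := by
  rw [qFactorial, map_prod]
  exact prod_eq_zero (mem_range.mpr (by omega : n - 1 < m))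
    (by rw [Nat.sub_add_cancel hn.le]; exact hζ.aeval_qNat_eq_zero hn)

theorem IsPrimitiveRoot.aeval_gaussPoly_eq_zero (hζ : IsPrimitiveRoot ζ n) {k s : ℕ} (hk : k < n)
    (hs : s < n) (hks : n ≤ k + s) : aeval ζ (gaussPoly (k + s) k) = 0 := by
  have hfac := congrArg (aeval ζ) (gaussPoly_mul_qFactorial_mul_qFactorial k s)
  rw [map_mul, map_mul, hζ.aeval_qFactorial_eq_zero (by omega) hks] at hfac
  simpa [hζ.aeval_qFactorial_ne_zero hk, hζ.aeval_qFactorial_ne_zero hs] using hfac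

end RootOfUnity

theorem main_identity_general {K : Type*} [Field K] {n : ℕ} (hn : 1 < n) {ω : K}
    (hω : IsPrimitiveRoot ω n) (k s : ℕ) (hk : k ≤ n - 1) (hs : s ≤ n - 1) :
    ∑ i ∈ Finset.Nat.antidiagonalTuple (s + 1) k, ω ^ (∑ j : Fin (s + 1), i j * (j : ℕ)) =
      if k + s < n then Polynomial.aeval ω (gaussPoly (k + s) k) else 0 := by
  have hsum : ∑ i ∈ Finset.Nat.antidiagonalTuple (s + 1) k, ω ^ tupleWeight i =
      aeval ω (gaussPoly (k + s) k) := by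
    simp [← sum_antidiagonalTuple_X_pow_tupleWeight, map_sum]
  refine hsum.trans ?_
  split_ifs with h
  · rfl
  · exact hω.aeval_gaussPoly_eq_zero (by omega) (by omega) (by omega)

theorem main_identity {K : Type*} [Field K] [CharZero K] {n : ℕ} (hn : 1 < n) {ω : K}
    (hω : IsPrimitiveRoot ω n) (k s : ℕ) (hk : k ≤ n - 1) (hs : s ≤ n - 1) :
    ∑ i ∈ Finset.Nat.antidiagonalTuple (s + 1) k, ω ^ (∑ j : Fin (s + 1), i j * (j : ℕ)) =
      if k + s < n then Polynomial.aeval ω (gaussPoly (k + s) k) else 0 :=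
  main_identity_general hn hω k s hk hs
end
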